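/- arXiv:2109.06900 — 4 statements merged into one kernel-verified Lean document; each statement's English description precedes it below -/
import Mathlib

section
/- Let {n₁, n₂, n₃} be an orthonormal basis of ℝ³ and let ρ be any qubit density matrix. Then the three variances satisfy the equality (ΔL_{n₁})²_ρ + (ΔL_{n₂})²_ρ + (ΔL_{n₃})²_ρ = 1 − (1/2)·Tr(ρ²), where L_n = (n₁σx + n₂σy + n₃σz)/2. -/
open Matrix BigOperators
open scoped ComplexOrder

/-- The Pauli matrix σx. -/
def sigmaX : Matrix (Fin 2) (Fin 2) ℂ := !![0, 1; 1, 0]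

/-- The Pauli matrix σy. -/
def sigmaY : Matrix (Fin 2) (Fin 2) ℂ := !![0, -Complex.I; Complex.I, 0]

/-- The Pauli matrix σz. -/
def sigmaZ : Matrix (Fin 2) (Fin 2) ℂ := !![1, 0; 0, -1]

/-- The spin-1/2 operator L_n = (n₁σx + n₂σy + n₃σz)/2 along the direction n ∈ ℝ³. -/
noncomputable def Lspin (n : Fin 3 → ℝ) : Matrix (Fin 2) (Fin 2) ℂ :=
  (1 / 2 : ℂ) • ((n 0 : ℂ) • sigmaX + (n 1 : ℂ) • sigmaY + (n 2 : ℂ) • sigmaZ)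

/-- A qubit density matrix: 2×2 positive semidefinite with unit trace. -/
def IsDensity (ρ : Matrix (Fin 2) (Fin 2) ℂ) : Prop :=
  ρ.PosSemidef ∧ ρ.trace = 1

/-- The rank-one projection |ψ⟩⟨ψ|. -/
def ketbra (ψ : Fin 2 → ℂ) : Matrix (Fin 2) (Fin 2) ℂ :=
  Matrix.vecMulVec ψ (star ψ)

/-- Pure-state variance (ΔA)²_ψ = ⟨ψ, A²ψ⟩ − ⟨ψ, Aψ⟩². -/
noncomputable def pureVar (A : Matrix (Fin 2) (Fin 2) ℂ) (ψ : Fin 2 → ℂ) : ℝ :=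
  (star ψ ⬝ᵥ (A * A).mulVec ψ).re - ((star ψ ⬝ᵥ A.mulVec ψ).re) ^ 2

/-- Mixed-state variance (ΔA)²_ρ = Tr(A²ρ) − (Tr(Aρ))². -/
noncomputable def mixVar (A ρ : Matrix (Fin 2) (Fin 2) ℂ) : ℝ :=
  ((A * A * ρ).trace).re - (((A * ρ).trace).re) ^ 2

/-- The purity Tr(ρ²). -/
noncomputable def purity (ρ : Matrix (Fin 2) (Fin 2) ℂ) : ℝ :=
  ((ρ * ρ).trace).re

theorem colOrtho (n₁ n₂ n₃ : Fin 3 → ℝ)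
    (h11 : n₁ ⬝ᵥ n₁ = 1) (h22 : n₂ ⬝ᵥ n₂ = 1) (h33 : n₃ ⬝ᵥ n₃ = 1)
    (h12 : n₁ ⬝ᵥ n₂ = 0) (h13 : n₁ ⬝ᵥ n₃ = 0) (h23 : n₂ ⬝ᵥ n₃ = 0) :
    ∀ k l : Fin 3, n₁ k * n₁ l + n₂ k * n₂ l + n₃ k * n₃ l = if k = l then 1 else 0 := by
  have h1 : Matrix.of ![n₁, n₂, n₃] * (Matrix.of ![n₁, n₂, n₃])ᵀ = 1 := by
    ext i j
    fin_cases i <;> fin_cases j <;>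
      simp_all [Matrix.mul_apply, Matrix.one_apply, Fin.sum_univ_three, dotProduct,
        Matrix.vecHead, Matrix.vecTail, Matrix.transpose_apply, Function.comp, mul_comm]
  have h2 := mul_eq_one_comm.mp h1
  intro k l
  have := congrFun (congrFun h2 k) l
  simpa [Matrix.mul_apply, Matrix.one_apply, Fin.sum_univ_three] using this

/-- Three-variance uncertainty equality for qubits:
(ΔL_{n₁})²_ρ + (ΔL_{n₂})²_ρ + (ΔL_{n₃})²_ρ = 1 − Tr(ρ²)/2. -/
theorem stmt_5 (n₁ n₂ n₃ : Fin 3 → ℝ)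
    (h11 : n₁ ⬝ᵥ n₁ = 1) (h22 : n₂ ⬝ᵥ n₂ = 1) (h33 : n₃ ⬝ᵥ n₃ = 1)
    (h12 : n₁ ⬝ᵥ n₂ = 0) (h13 : n₁ ⬝ᵥ n₃ = 0) (h23 : n₂ ⬝ᵥ n₃ = 0)
    (ρ : Matrix (Fin 2) (Fin 2) ℂ) (hρ : IsDensity ρ) :
    mixVar (Lspin n₁) ρ + mixVar (Lspin n₂) ρ + mixVar (Lspin n₃) ρ
      = 1 - (1 / 2) * purity ρ := by
  obtain ⟨hpsd, htr⟩ := hρ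
  have hH := hpsd.isHermitian
  have h10 : ρ 1 0 = star (ρ 0 1) := by
    conv_lhs => rw [← hH]
    simp [Matrix.conjTranspose_apply]
  have h00i : (ρ 0 0).im = 0 := by
    have h : ρ 0 0 = star (ρ 0 0) := by
      conv_lhs => rw [← hH]
      simp [Matrix.conjTranspose_apply]
    have := congrArg Complex.im h
    simp [Complex.conj_im] at this
    linarith
  have h11i : (ρ 1 1).im = 0 := by
    have h : ρ 1 1 = star (ρ 1 1) := by
      conv_lhs => rw [← hH]
      simp [Matrix.conjTranspose_apply]
    have := congrArg Complex.im h
    simp [Complex.conj_im] at this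
    linarith
  have htr' : (ρ 0 0).re + (ρ 1 1).re = 1 := by
    have := congrArg Complex.re htr
    simpa [Matrix.trace, Fin.sum_univ_two] using this
  have col := colOrtho n₁ n₂ n₃ h11 h22 h33 h12 h13 h23
  have c00 : n₁ 0 * n₁ 0 + n₂ 0 * n₂ 0 + n₃ 0 * n₃ 0 = 1 := by simpa using col 0 0
  have c11 : n₁ 1 * n₁ 1 + n₂ 1 * n₂ 1 + n₃ 1 * n₃ 1 = 1 := by simpa using col 1 1
  have c22 : n₁ 2 * n₁ 2 + n₂ 2 * n₂ 2 + n₃ 2 * n₃ 2 = 1 := by simpa using col 2 2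
  have c01 : n₁ 0 * n₁ 1 + n₂ 0 * n₂ 1 + n₃ 0 * n₃ 1 = 0 := by simpa using col 0 1
  have c02 : n₁ 0 * n₁ 2 + n₂ 0 * n₂ 2 + n₃ 0 * n₃ 2 = 0 := by simpa using col 0 2
  have c12 : n₁ 1 * n₁ 2 + n₂ 1 * n₂ 2 + n₃ 1 * n₃ 2 = 0 := by simpa using col 1 2
  simp only [dotProduct, Fin.sum_univ_three] at h11 h22 h33
  set a := (ρ 0 0).re
  set d := (ρ 1 1).re
  set r := (ρ 0 1).re
  set s := (ρ 0 1).im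
  simp only [mixVar, purity, Lspin, sigmaX, sigmaY, sigmaZ, Matrix.trace, Matrix.diag,
    Fin.sum_univ_two, Matrix.mul_apply, Matrix.smul_apply, Matrix.add_apply,
    Matrix.cons_val', Matrix.cons_val_zero, Matrix.cons_val_one, Matrix.head_cons,
    Matrix.head_fin_const, Matrix.empty_val', Matrix.cons_val_fin_one, smul_eq_mul, h10]
  norm_num [Complex.add_re, Complex.mul_re, Complex.add_im, Complex.mul_im, h00i, h11i]
  linear_combination ((a + d) / 4) * (h11 + h22 + h33) - r ^ 2 * c00 - s ^ 2 * c11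
    - ((a - d) ^ 2 / 4) * c22 + (2 * r * s) * c01 - (r * (a - d)) * c02 + (s * (a - d)) * c12
    + ((a + d + 4) / 4) * htr'
end

section
/- Let ρ be a qubit density matrix and n ∈ ℝ³ a unit vector. Then every pure-state decomposition ρ = ∑ₖ pₖ |ψₖ⟩⟨ψₖ| (pₖ ≥ 0, ∑ₖ pₖ = 1, ψₖ ∈ ℂ² unit vectors) satisfies ∑ₖ pₖ (ΔL_n)²_{ψₖ} ≥ (ΔL_n)²_ρ − (1 − Tr(ρ²))/2. (Since the quantum Fisher information is the convex roof of four times the variance, this expresses the qubit identity (ΔL_n)²_ρ − (1/4)F_Q[ρ, L_n] = (1 − Tr ρ²)/2 as a lower bound over all decompositions.) -/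
/-!
In Bloch form a qubit state is `ρ = (1 + r·σ)/2`; then `Tr ρ² = (1 + ‖r‖²)/2` and
`(ΔL_n)²_ρ = (1 - ⟪n, r⟫²)/4`, and pure states are exactly those with `‖r‖ = 1`. A decomposition
`ρ = ∑ pₖ |ψₖ⟩⟨ψₖ|` averages the Bloch vectors, `r = ∑ pₖ rₖ`, so the inequality becomes
`∑ pₖ ⟪n, rₖ⟫² - ⟪n, r⟫² ≤ ∑ pₖ ‖rₖ‖² - ‖r‖²`: the variance of the projections onto the unit
vector `n` is at most the total variance of the `rₖ`, by Cauchy–Schwarz applied to `rₖ - r`.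
-/

open Matrix BigOperators
open scoped ComplexOrder

open Finset RealInnerProductSpace

section WeightedVariance

variable {ι E : Type*} [Fintype ι] [NormedAddCommGroup E] [InnerProductSpace ℝ E]

theorem sum_mul_norm_sub_sum_smul_sq (p : ι → ℝ) (hp : ∑ i, p i = 1) (x : ι → E) :
    ∑ i, p i * ‖x i - ∑ j, p j • x j‖ ^ 2 = ∑ i, p i * ‖x i‖ ^ 2 - ‖∑ j, p j • x j‖ ^ 2 := by
  set m := ∑ j, p j • x j
  have hm : ∑ i, p i * ⟪x i, m⟫ = ‖m‖ ^ 2 := by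
    rw [← real_inner_self_eq_norm_sq, sum_inner]
    simp_rw [real_inner_smul_left]
  simp_rw [norm_sub_sq_real, mul_add, mul_sub, sum_add_distrib, sum_sub_distrib, ← sum_mul, hp,
    mul_left_comm _ (2 : ℝ), ← mul_sum, hm]
  ring

theorem sum_mul_inner_sq_sub_le (p : ι → ℝ) (hp0 : ∀ i, 0 ≤ p i) (hp1 : ∑ i, p i = 1)
    (x : ι → E) {n : E} (hn : ‖n‖ ≤ 1) :
    ∑ i, p i * ⟪n, x i⟫ ^ 2 - ⟪n, ∑ i, p i • x i⟫ ^ 2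
      ≤ ∑ i, p i * ‖x i‖ ^ 2 - ‖∑ i, p i • x i‖ ^ 2 := by
  have hproj := sum_mul_norm_sub_sum_smul_sq p hp1 fun i ↦ ⟪n, x i⟫
  simp only [Real.norm_eq_abs, sq_abs, smul_eq_mul, ← real_inner_smul_right, ← inner_sum,
    ← inner_sub_right] at hproj
  rw [← hproj, ← sum_mul_norm_sub_sum_smul_sq p hp1 x]
  refine sum_le_sum fun i _ ↦ mul_le_mul_of_nonneg_left ?_ (hp0 i)
  calc ⟪n, x i - ∑ j, p j • x j⟫ ^ 2 ≤ (‖n‖ * ‖x i - ∑ j, p j • x j‖) ^ 2 :=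
        sq_le_sq' (neg_le_of_abs_le (abs_real_inner_le_norm _ _)) (real_inner_le_norm _ _)
    _ ≤ ‖x i - ∑ j, p j • x j‖ ^ 2 := by gcongr; exact mul_le_of_le_one_left (norm_nonneg _) hn

end WeightedVariance

noncomputable def pauliDot : EuclideanSpace ℝ (Fin 3) →ₗ[ℝ] Matrix (Fin 2) (Fin 2) ℂ where
  toFun a := (a 0 : ℂ) • sigmaX + (a 1 : ℂ) • sigmaY + (a 2 : ℂ) • sigmaZ
  map_add' a b := by simp only [PiLp.add_apply, Complex.ofReal_add, add_smul]; abel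
  map_smul' c a := by
    simp only [PiLp.smul_apply, smul_eq_mul, Complex.ofReal_mul, mul_smul, smul_add,
      RingHom.id_apply, Complex.coe_smul]

theorem Lspin_eq_pauliDot (n : Fin 3 → ℝ) : Lspin n = (1 / 2 : ℂ) • pauliDot (WithLp.toLp 2 n) :=
  rfl

theorem real_inner_eq_fin_three (a b : EuclideanSpace ℝ (Fin 3)) :
    ⟪a, b⟫ = a 0 * b 0 + a 1 * b 1 + a 2 * b 2 := by
  simp [EuclideanSpace.inner_eq_star_dotProduct, dotProduct, Fin.sum_univ_three, mul_comm]

theorem pauliDot_mul_self (a : EuclideanSpace ℝ (Fin 3)) :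
    pauliDot a * pauliDot a = ((‖a‖ ^ 2 : ℝ) : ℂ) • 1 := by
  rw [← real_inner_self_eq_norm_sq, real_inner_eq_fin_three]
  ext i j
  fin_cases i <;> fin_cases j <;>
    simp [pauliDot, sigmaX, sigmaY, sigmaZ, Matrix.mul_apply, Fin.sum_univ_two]
  · linear_combination (-(a 1 : ℂ) ^ 2) * Complex.I_sq
  · ring
  · ring
  · linear_combination (-(a 1 : ℂ) ^ 2) * Complex.I_sq

theorem trace_pauliDot (a : EuclideanSpace ℝ (Fin 3)) : (pauliDot a).trace = 0 := by
  simp [pauliDot, sigmaX, sigmaY, sigmaZ, Matrix.trace, Fin.sum_univ_two]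

theorem trace_pauliDot_mul (a b : EuclideanSpace ℝ (Fin 3)) :
    (pauliDot a * pauliDot b).trace = 2 * ⟪a, b⟫ := by
  rw [real_inner_eq_fin_three]
  simp [pauliDot, sigmaX, sigmaY, sigmaZ, Matrix.trace, Fin.sum_univ_two]
  linear_combination (-2 * (a 1 : ℂ) * b 1) * Complex.I_sq

noncomputable def blochState (a : EuclideanSpace ℝ (Fin 3)) : Matrix (Fin 2) (Fin 2) ℂ :=
  (1 / 2 : ℂ) • (1 + pauliDot a)

theorem trace_blochState (a : EuclideanSpace ℝ (Fin 3)) : (blochState a).trace = 1 := by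
  simp [blochState, trace_pauliDot]

theorem trace_pauliDot_mul_blochState (a b : EuclideanSpace ℝ (Fin 3)) :
    (pauliDot b * blochState a).trace = ⟪b, a⟫ := by
  simp [blochState, mul_add, trace_pauliDot, trace_pauliDot_mul]

theorem Lspin_mul_self (n : Fin 3 → ℝ) :
    Lspin n * Lspin n = ((‖WithLp.toLp 2 n‖ ^ 2 / 4 : ℝ) : ℂ) • 1 := by
  rw [Lspin_eq_pauliDot, smul_mul_smul_comm, pauliDot_mul_self, smul_smul]
  push_cast
  ring_nf

theorem mixVar_Lspin_blochState (n : Fin 3 → ℝ) (a : EuclideanSpace ℝ (Fin 3)) :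
    mixVar (Lspin n) (blochState a) =
      (‖WithLp.toLp 2 n‖ ^ 2 - ⟪WithLp.toLp 2 n, a⟫ ^ 2) / 4 := by
  have hsq : (Lspin n * Lspin n * blochState a).trace = ((‖WithLp.toLp 2 n‖ ^ 2 / 4 : ℝ) : ℂ) := by
    rw [Lspin_mul_self, smul_mul_assoc, one_mul, trace_smul, trace_blochState, smul_eq_mul, mul_one]
  have hmean : (Lspin n * blochState a).trace = ((⟪WithLp.toLp 2 n, a⟫ / 2 : ℝ) : ℂ) := by
    rw [Lspin_eq_pauliDot, smul_mul_assoc, trace_smul, trace_pauliDot_mul_blochState, smul_eq_mul]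
    push_cast
    ring
  rw [mixVar, hsq, hmean, Complex.ofReal_re, Complex.ofReal_re]
  ring

theorem purity_blochState (a : EuclideanSpace ℝ (Fin 3)) :
    purity (blochState a) = (1 + ‖a‖ ^ 2) / 2 := by
  simp [purity, blochState, mul_add, add_mul, pauliDot_mul_self, trace_pauliDot]
  norm_cast
  ring

theorem sum_smul_blochState {ι : Type*} [Fintype ι] (p : ι → ℝ) (hp : ∑ i, p i = 1)
    (a : ι → EuclideanSpace ℝ (Fin 3)) :
    ∑ i, p i • blochState (a i) = blochState (∑ i, p i • a i) := by
  simp only [blochState, map_sum, map_smul, smul_add, smul_comm (p _) (1 / 2 : ℂ),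
    sum_add_distrib, ← smul_sum, ← sum_smul, hp, one_smul]

-- The coordinates are read off from `ψ ψ† = (‖ψ‖² + r·σ) / 2`.
noncomputable def blochVector (ψ : Fin 2 → ℂ) : EuclideanSpace ℝ (Fin 3) :=
  !₂[2 * (star (ψ 0) * ψ 1).re, 2 * (star (ψ 0) * ψ 1).im,
    Complex.normSq (ψ 0) - Complex.normSq (ψ 1)]

theorem normSq_add_normSq_eq_one {ψ : Fin 2 → ℂ} (hψ : star ψ ⬝ᵥ ψ = 1) :
    Complex.normSq (ψ 0) + Complex.normSq (ψ 1) = 1 := by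
  simp only [dotProduct, Fin.sum_univ_two, Pi.star_apply, RCLike.star_def,
    ← Complex.normSq_eq_conj_mul_self] at hψ
  exact_mod_cast hψ

theorem ketbra_eq_blochState {ψ : Fin 2 → ℂ} (hψ : star ψ ⬝ᵥ ψ = 1) :
    ketbra ψ = blochState (blochVector ψ) := by
  have h := normSq_add_normSq_eq_one hψ
  ext i j
  fin_cases i <;> fin_cases j <;> apply Complex.ext <;>
    simp [ketbra, vecMulVec_apply, blochState, blochVector, pauliDot, sigmaX, sigmaY, sigmaZ,
      Complex.normSq_apply] at h ⊢ <;>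
    first | linear_combination (1 / 2) * h | ring

theorem norm_blochVector (ψ : Fin 2 → ℂ) :
    ‖blochVector ψ‖ = Complex.normSq (ψ 0) + Complex.normSq (ψ 1) := by
  rw [← sq_eq_sq₀ (norm_nonneg _) (add_nonneg (Complex.normSq_nonneg _) (Complex.normSq_nonneg _)),
    ← real_inner_self_eq_norm_sq, real_inner_eq_fin_three]
  simp [blochVector, Complex.normSq_apply]
  ring

theorem pureVar_eq_mixVar_ketbra (A : Matrix (Fin 2) (Fin 2) ℂ) (ψ : Fin 2 → ℂ) :
    pureVar A ψ = mixVar A (ketbra ψ) := by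
  simp only [pureVar, mixVar, ketbra, mul_vecMulVec, trace_vecMulVec, dotProduct_comm _ (star ψ)]

theorem stmt_6_general (ρ : Matrix (Fin 2) (Fin 2) ℂ)
    (n : Fin 3 → ℝ) (hn : n ⬝ᵥ n = 1)
    (m : ℕ) (p : Fin m → ℝ) (ψ : Fin m → (Fin 2 → ℂ))
    (hp : ∀ k, 0 ≤ p k) (hp1 : (∑ k, p k) = 1)
    (hψ : ∀ k, star (ψ k) ⬝ᵥ ψ k = 1)
    (hdec : ρ = ∑ k, p k • ketbra (ψ k)) :
    mixVar (Lspin n) ρ - (1 - purity ρ) / 2 ≤ ∑ k, p k * pureVar (Lspin n) (ψ k) := by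
  set r := fun k ↦ blochVector (ψ k)
  have hr : ∀ k, ‖r k‖ = 1 := fun k ↦ (norm_blochVector _).trans (normSq_add_normSq_eq_one (hψ k))
  have hn' : ‖WithLp.toLp 2 n‖ = 1 := by
    rw [← pow_eq_one_iff_of_nonneg (norm_nonneg _) two_ne_zero, ← real_inner_self_eq_norm_sq,
      EuclideanSpace.inner_toLp_toLp, star_trivial, hn]
  have hρ : ρ = blochState (∑ k, p k • r k) := by
    simp_rw [hdec, ← sum_smul_blochState p hp1, r, ketbra_eq_blochState (hψ _)]
  have hvar := sum_mul_inner_sq_sub_le p hp hp1 r hn'.le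
  simp only [hr, one_pow, mul_one, hp1] at hvar
  simp only [hρ, pureVar_eq_mixVar_ketbra, ketbra_eq_blochState (hψ _), mixVar_Lspin_blochState,
    purity_blochState, hn', one_pow]
  have hsum : ∑ k, p k * ((1 - ⟪WithLp.toLp 2 n, r k⟫ ^ 2) / 4)
      = (∑ k, p k - ∑ k, p k * ⟪WithLp.toLp 2 n, r k⟫ ^ 2) / 4 := by
    rw [← sum_sub_distrib, sum_div]
    exact sum_congr rfl fun k _ ↦ by ring
  rw [hsum, hp1]
  linarith

/-- Every pure-state decomposition of a qubit state ρ has average variance bounded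
below by (ΔL_n)²_ρ − (1 − Tr ρ²)/2 (which equals (1/4)F_Q[ρ, L_n]). -/
theorem stmt_6 (ρ : Matrix (Fin 2) (Fin 2) ℂ) (hρ : IsDensity ρ)
    (n : Fin 3 → ℝ) (hn : n ⬝ᵥ n = 1)
    (m : ℕ) (p : Fin m → ℝ) (ψ : Fin m → (Fin 2 → ℂ))
    (hp : ∀ k, 0 ≤ p k) (hp1 : (∑ k, p k) = 1)
    (hψ : ∀ k, star (ψ k) ⬝ᵥ ψ k = 1)
    (hdec : ρ = ∑ k, p k • ketbra (ψ k)) :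
    mixVar (Lspin n) ρ - (1 - purity ρ) / 2 ≤ ∑ k, p k * pureVar (Lspin n) (ψ k) :=
  stmt_6_general ρ n hn m p ψ hp hp1 hψ hdec
end

section
/- Let n₁, n₂ ∈ ℝ³ be orthogonal unit vectors and ρ any qubit density matrix. Then the purity-dependent two-direction uncertainty relation holds: (3 − 2·Tr(ρ²))/4 ≤ (ΔL_{n₁})²_ρ + (ΔL_{n₂})²_ρ ≤ 1/2. In particular, for pure states the lower bound reduces to the state-independent bound 1/4. -/
open Matrix BigOperators
open scoped ComplexOrder

lemma Lspin_eq (n : Fin 3 → ℝ) : Lspin n =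
    !![(n 2 : ℂ)/2, ((n 0 : ℂ) - (n 1 : ℂ)*Complex.I)/2;
       ((n 0 : ℂ) + (n 1 : ℂ)*Complex.I)/2, -(n 2 : ℂ)/2] := by
  ext i j
  fin_cases i <;> fin_cases j <;>
    simp [Lspin, sigmaX, sigmaY, sigmaZ] <;> ring

lemma Lspin_sq (n : Fin 3 → ℝ) (hn : n ⬝ᵥ n = 1) :
    Lspin n * Lspin n = (1/4 : ℂ) • 1 := by
  have h : ((n 0 : ℂ))^2 + ((n 1 : ℂ))^2 + ((n 2 : ℂ))^2 = 1 := by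
    simp [dotProduct, Fin.sum_univ_three] at hn
    exact_mod_cast by nlinarith [hn]
  rw [Lspin_eq]
  ext i j
  fin_cases i <;> fin_cases j <;>
    simp [Matrix.mul_apply, Fin.sum_univ_two, Matrix.one_apply]
  · linear_combination h/4 - ((n 1:ℝ):ℂ)^2/4 * Complex.I_sq
  · ring
  · ring
  · linear_combination h/4 - ((n 1:ℝ):ℂ)^2/4 * Complex.I_sq

lemma traceL_re (n : Fin 3 → ℝ) (ρ : Matrix (Fin 2) (Fin 2) ℂ)
    (h10 : ρ 1 0 = star (ρ 0 1)) :
    ((Lspin n * ρ).trace).re =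
      n 0 * (ρ 0 1).re - n 1 * (ρ 0 1).im + n 2 * ((ρ 0 0).re - (ρ 1 1).re) / 2 := by
  rw [Lspin_eq]
  simp [Matrix.trace, Matrix.mul_apply, Fin.sum_univ_two, Matrix.diag, h10,
    Complex.add_re, Complex.mul_re, Complex.div_re, Complex.ext_iff]
  ring

lemma purity_eq (ρ : Matrix (Fin 2) (Fin 2) ℂ)
    (h10 : ρ 1 0 = star (ρ 0 1)) (h00 : (ρ 0 0).im = 0) (h11 : (ρ 1 1).im = 0) :
    purity ρ = (ρ 0 0).re^2 + (ρ 1 1).re^2 + 2*((ρ 0 1).re^2 + (ρ 0 1).im^2) := by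
  simp [purity, Matrix.trace, Matrix.mul_apply, Fin.sum_univ_two, Matrix.diag, h10,
    Complex.add_re, Complex.mul_re, h00, h11]
  ring

lemma mixVar_eq (n : Fin 3 → ℝ) (hn : n ⬝ᵥ n = 1) (ρ : Matrix (Fin 2) (Fin 2) ℂ)
    (htr : ρ.trace = 1) (h10 : ρ 1 0 = star (ρ 0 1)) :
    mixVar (Lspin n) ρ =
      1/4 - (n 0 * (ρ 0 1).re - n 1 * (ρ 0 1).im + n 2 * ((ρ 0 0).re - (ρ 1 1).re) / 2)^2 := by
  have h1 : (Lspin n * Lspin n * ρ).trace = (1/4 : ℂ) := by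
    rw [Lspin_sq n hn, Matrix.smul_mul, Matrix.one_mul, Matrix.trace_smul, htr, smul_eq_mul,
      mul_one]
  rw [mixVar, h1, traceL_re n ρ h10]
  norm_num

lemma bessel (a1 a2 a3 b1 b2 b3 x y z : ℝ)
    (ha : a1^2 + a2^2 + a3^2 = 1) (hb : b1^2 + b2^2 + b3^2 = 1)
    (hab : a1*b1 + a2*b2 + a3*b3 = 0) :
    (a1*x + a2*y + a3*z)^2 + (b1*x + b2*y + b3*z)^2 ≤ x^2 + y^2 + z^2 := by
  have key : x^2 + y^2 + z^2 - (a1*x + a2*y + a3*z)^2 - (b1*x + b2*y + b3*z)^2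
      = (x*(a2*b3 - a3*b2) + y*(a3*b1 - a1*b3) + z*(a1*b2 - a2*b1))^2 := by
    linear_combination
      (-((b1^2 + b2^2 + b3^2)*(x^2 + y^2 + z^2) - (b1*x + b2*y + b3*z)^2)) * ha
      + (-((x^2 + y^2 + z^2) - (a1*x + a2*y + a3*z)^2)) * hb
      + ((a1*b1 + a2*b2 + a3*b3)*(x^2 + y^2 + z^2)
          - 2*(a1*x + a2*y + a3*z)*(b1*x + b2*y + b3*z)) * hab
  nlinarith [key, sq_nonneg (x*(a2*b3 - a3*b2) + y*(a3*b1 - a1*b3) + z*(a1*b2 - a2*b1))]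

/-- Purity-dependent two-direction uncertainty relation for qubits:
(3 − 2 Tr ρ²)/4 ≤ (ΔL_{n₁})²_ρ + (ΔL_{n₂})²_ρ ≤ 1/2. -/
theorem stmt_10 (n₁ n₂ : Fin 3 → ℝ)
    (h11 : n₁ ⬝ᵥ n₁ = 1) (h22 : n₂ ⬝ᵥ n₂ = 1) (h12 : n₁ ⬝ᵥ n₂ = 0)
    (ρ : Matrix (Fin 2) (Fin 2) ℂ) (hρ : IsDensity ρ) :
    (3 - 2 * purity ρ) / 4 ≤ mixVar (Lspin n₁) ρ + mixVar (Lspin n₂) ρ ∧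
    mixVar (Lspin n₁) ρ + mixVar (Lspin n₂) ρ ≤ 1 / 2 := by
  obtain ⟨hPSD, htr⟩ := hρ
  have hH := hPSD.1
  have h10 : ρ 1 0 = star (ρ 0 1) := by
    have := congrFun (congrFun hH.symm 1) 0
    simpa [Matrix.conjTranspose_apply] using this
  have h00 : (ρ 0 0).im = 0 := by
    have := congrFun (congrFun hH 0) 0
    simp [Matrix.conjTranspose_apply, Complex.ext_iff] at this
    linarith
  have h11' : (ρ 1 1).im = 0 := by
    have := congrFun (congrFun hH 1) 1
    simp [Matrix.conjTranspose_apply, Complex.ext_iff] at this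
    linarith
  have hsum : (ρ 0 0).re + (ρ 1 1).re = 1 := by
    have := htr
    simp [Matrix.trace, Fin.sum_univ_two, Matrix.diag, Complex.ext_iff] at this
    linarith [this.1]
  set a := (ρ 0 0).re
  set d := (ρ 1 1).re
  set x := (ρ 0 1).re
  set y := (ρ 0 1).im
  rw [mixVar_eq n₁ h11 ρ htr h10, mixVar_eq n₂ h22 ρ htr h10,
    purity_eq ρ h10 h00 h11']
  have hd1 : n₁ 0 ^2 + n₁ 1 ^2 + n₁ 2 ^2 = 1 := by
    simpa [dotProduct, Fin.sum_univ_three, sq] using h11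
  have hd2 : n₂ 0 ^2 + n₂ 1 ^2 + n₂ 2 ^2 = 1 := by
    simpa [dotProduct, Fin.sum_univ_three, sq] using h22
  have hd12 : n₁ 0 * n₂ 0 + n₁ 1 * n₂ 1 + n₁ 2 * n₂ 2 = 0 := by
    simpa [dotProduct, Fin.sum_univ_three] using h12
  have hB := bessel (n₁ 0) (n₁ 1) (n₁ 2) (n₂ 0) (n₂ 1) (n₂ 2) x (-y) ((a-d)/2) hd1 hd2 hd12
  constructor
  · nlinarith [hB, hsum]
  · nlinarith [sq_nonneg (n₁ 0 * x - n₁ 1 * y + n₁ 2 * (a - d)/2),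
      sq_nonneg (n₂ 0 * x - n₂ 1 * y + n₂ 2 * (a - d)/2)]
end

section
/- Let a, b ∈ ℝ³ be unit vectors (not necessarily orthogonal) and ρ a qubit density matrix. Then every pure-state decomposition ρ = ∑ₖ pₖ |ψₖ⟩⟨ψₖ| satisfies ∑ₖ pₖ (ΔL_a)²_{ψₖ} + (ΔL_b)²_ρ ≥ (1 − |a·b|)/4. (Since the quantum Fisher information is the convex roof of four times the variance, this is the tightened Busch-type uncertainty relation (1/4)F_Q[ρ, L_a] + (ΔL_b)²_ρ ≥ (1 − |a·b|)/4 for spin-1/2.) -/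
open Matrix BigOperators
open scoped ComplexOrder

/-! ### Auxiliary lemmas -/

/-- The Bloch vector of a qubit state vector. -/
noncomputable def bloch (ψ : Fin 2 → ℂ) : Fin 3 → ℝ :=
  ![2*((ψ 0).re*(ψ 1).re + (ψ 0).im*(ψ 1).im),
    2*((ψ 0).re*(ψ 1).im - (ψ 0).im*(ψ 1).re),
    (ψ 0).re^2+(ψ 0).im^2 - (ψ 1).re^2 - (ψ 1).im^2]

lemma expect_eq (n : Fin 3 → ℝ) (ψ : Fin 2 → ℂ) :
    (star ψ ⬝ᵥ (Lspin n).mulVec ψ).re = (n ⬝ᵥ bloch ψ) / 2 := by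
  simp [Lspin, sigmaX, sigmaY, sigmaZ, dotProduct, mulVec, Fin.sum_univ_two, Fin.sum_univ_three,
    bloch, Matrix.smul_apply, Matrix.add_apply, Complex.add_re, Complex.mul_re, Complex.mul_im,
    Complex.add_im, Complex.ofReal_re, Complex.ofReal_im, Complex.I_re, Complex.I_im]
  ring

lemma norm_sq_eq (ψ : Fin 2 → ℂ) (hψ : star ψ ⬝ᵥ ψ = 1) :
    (ψ 0).re^2+(ψ 0).im^2 + (ψ 1).re^2 + (ψ 1).im^2 = 1 := by
  have := congrArg Complex.re hψ
  simp [dotProduct, Fin.sum_univ_two, Complex.add_re, Complex.mul_re] at this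
  nlinarith [this]

lemma bloch_unit (ψ : Fin 2 → ℂ) (hψ : star ψ ⬝ᵥ ψ = 1) :
    bloch ψ ⬝ᵥ bloch ψ = 1 := by
  have h := norm_sq_eq ψ hψ
  simp only [bloch, dotProduct, Fin.sum_univ_three, Matrix.cons_val_zero, Matrix.cons_val_one,
    Matrix.head_cons, Matrix.cons_val_two, Matrix.tail_cons]
  nlinarith [h]

lemma Lsq (n : Fin 3 → ℝ) : Lspin n * Lspin n = (((n ⬝ᵥ n : ℝ) : ℂ)/4) • 1 := by
  ext i j
  fin_cases i <;> fin_cases j <;>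
    simp [Lspin, sigmaX, sigmaY, sigmaZ, mul_apply, Fin.sum_univ_two, Fin.sum_univ_three,
      dotProduct, Matrix.one_apply, Complex.ext_iff, Complex.add_re, Complex.mul_re,
      Complex.mul_im, Complex.add_im] <;> ring_nf <;> simp [Complex.I_sq]

lemma trace_mul_ketbra (A : Matrix (Fin 2) (Fin 2) ℂ) (ψ : Fin 2 → ℂ) :
    (A * ketbra ψ).trace = star ψ ⬝ᵥ A.mulVec ψ := by
  simp [ketbra, trace, mul_apply, vecMulVec_apply, dotProduct, mulVec, Fin.sum_univ_two,
    Matrix.diag]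
  ring

lemma cs3 (u v : Fin 3 → ℝ) : (u ⬝ᵥ v)^2 ≤ (u ⬝ᵥ u) * (v ⬝ᵥ v) := by
  simp only [dotProduct, Fin.sum_univ_three]
  nlinarith [sq_nonneg (u 0 * v 1 - u 1 * v 0), sq_nonneg (u 0 * v 2 - u 2 * v 0),
    sq_nonneg (u 1 * v 2 - u 2 * v 1)]

set_option maxHeartbeats 1000000 in
lemma key_scalar (a b r : Fin 3 → ℝ) (ha : a ⬝ᵥ a = 1) (hb : b ⬝ᵥ b = 1) (hr : r ⬝ᵥ r = 1) :
    (b ⬝ᵥ r)^2 ≤ 1 - (a ⬝ᵥ r)^2 + |a ⬝ᵥ b| := by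
  have hG : (a ⬝ᵥ a)*(b ⬝ᵥ b)*(r ⬝ᵥ r) + 2*(a ⬝ᵥ b)*(b ⬝ᵥ r)*(a ⬝ᵥ r)
      - (a ⬝ᵥ a)*(b ⬝ᵥ r)^2 - (b ⬝ᵥ b)*(a ⬝ᵥ r)^2 - (r ⬝ᵥ r)*(a ⬝ᵥ b)^2
      = (a 0 * (b 1 * r 2 - b 2 * r 1) - a 1 * (b 0 * r 2 - b 2 * r 0)
        + a 2 * (b 0 * r 1 - b 1 * r 0))^2 := by
    simp only [dotProduct, Fin.sum_univ_three]; ring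
  rw [ha, hb, hr] at hG
  set c := a ⬝ᵥ b
  set t := a ⬝ᵥ r
  set s := b ⬝ᵥ r
  have h1 : s^2 + t^2 - 2*c*s*t ≤ 1 - c^2 := by
    nlinarith [sq_nonneg (a 0 * (b 1 * r 2 - b 2 * r 1) - a 1 * (b 0 * r 2 - b 2 * r 0)
        + a 2 * (b 0 * r 1 - b 1 * r 0))]
  have hs1 : s^2 ≤ 1 := by have := cs3 b r; rw [hb, hr, one_mul] at this; exact this
  have ht1 : t^2 ≤ 1 := by have := cs3 a r; rw [ha, hr, one_mul] at this; exact this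
  have hc1 : c^2 ≤ 1 := by have := cs3 a b; rw [ha, hb, one_mul] at this; exact this
  have hdc : c ≤ |c| := le_abs_self c
  have hdc' : -|c| ≤ c := neg_abs_le c
  have hd2 : |c|^2 = c^2 := sq_abs c
  have hd1 : |c| ≤ 1 := abs_le.mpr ⟨by nlinarith, by nlinarith⟩
  have hpc : 0 ≤ |c| - c := by linarith
  have hmc : 0 ≤ |c| + c := by linarith
  nlinarith [mul_nonneg hpc (sq_nonneg (s+t)), mul_nonneg hmc (sq_nonneg (s-t)),
    mul_nonneg (sub_nonneg.2 hd1) (sq_nonneg s), mul_nonneg (sub_nonneg.2 hd1) (sq_nonneg t),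
    h1, hs1, ht1]

lemma jensen_sq {m : ℕ} (p s : Fin m → ℝ) (hp : ∀ k, 0 ≤ p k) (hp1 : (∑ k, p k) = 1) :
    (∑ k, p k * s k)^2 ≤ ∑ k, p k * (s k)^2 := by
  have h := Finset.sum_sq_le_sum_mul_sum_of_sq_eq_mul Finset.univ
    (r := fun k => p k * s k) (f := fun k => p k) (g := fun k => p k * (s k)^2)
    (fun i _ => hp i) (fun i _ => mul_nonneg (hp i) (sq_nonneg _))
    (fun i _ => by ring)
  simpa [hp1] using h

/-- pure variance formula -/
lemma pureVar_eq (n : Fin 3 → ℝ) (hn : n ⬝ᵥ n = 1) (ψ : Fin 2 → ℂ) (hψ : star ψ ⬝ᵥ ψ = 1) :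
    pureVar (Lspin n) ψ = 1/4 - (n ⬝ᵥ bloch ψ)^2/4 := by
  have h2 : (star ψ ⬝ᵥ (Lspin n * Lspin n).mulVec ψ).re = 1/4 := by
    rw [Lsq n, hn]
    simp [Matrix.smul_mulVec, Matrix.one_mulVec, dotProduct_smul, hψ]
  rw [pureVar, h2, expect_eq]
  ring

/-- Tightened Busch-type uncertainty relation for spin-1/2:
(1/4)F_Q[ρ,L_a] + (ΔL_b)²_ρ ≥ (1 − |a·b|)/4, expressed via pure-state decompositions. -/
theorem stmt_12 (a b : Fin 3 → ℝ) (ha : a ⬝ᵥ a = 1) (hb : b ⬝ᵥ b = 1)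
    (ρ : Matrix (Fin 2) (Fin 2) ℂ) (hρ : IsDensity ρ)
    (m : ℕ) (p : Fin m → ℝ) (ψ : Fin m → (Fin 2 → ℂ))
    (hp : ∀ k, 0 ≤ p k) (hp1 : (∑ k, p k) = 1)
    (hψ : ∀ k, star (ψ k) ⬝ᵥ ψ k = 1)
    (hdec : ρ = ∑ k, p k • ketbra (ψ k)) :
    (1 - |a ⬝ᵥ b|) / 4
      ≤ (∑ k, p k * pureVar (Lspin a) (ψ k)) + mixVar (Lspin b) ρ := by
  -- notation
  set c := a ⬝ᵥ b with hc
  have htr : ρ.trace = 1 := hρ.2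
  -- trace of L_b * ρ
  have htrL : ((Lspin b * ρ).trace).re = ∑ k, p k * ((b ⬝ᵥ bloch (ψ k)) / 2) := by
    rw [hdec, Finset.mul_sum]
    rw [Matrix.trace_sum]
    rw [Complex.re_sum]
    refine Finset.sum_congr rfl fun k _ => ?_
    rw [mul_smul_comm, Matrix.trace_smul, trace_mul_ketbra]
    rw [Complex.real_smul, Complex.re_ofReal_mul, expect_eq]
  -- trace of L_b² ρ
  have htrL2 : ((Lspin b * Lspin b * ρ).trace).re = 1/4 := by
    rw [Lsq b, hb, Matrix.smul_mul, Matrix.trace_smul, one_mul, htr]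
    norm_num
  have hmix : mixVar (Lspin b) ρ = 1/4 - (∑ k, p k * (b ⬝ᵥ bloch (ψ k)))^2/4 := by
    rw [mixVar, htrL2, htrL]
    have : (∑ k, p k * ((b ⬝ᵥ bloch (ψ k)) / 2)) = (∑ k, p k * (b ⬝ᵥ bloch (ψ k)))/2 := by
      rw [Finset.sum_div]; exact Finset.sum_congr rfl fun k _ => by ring
    rw [this]; ring
  have hpure : ∀ k, pureVar (Lspin a) (ψ k) = 1/4 - (a ⬝ᵥ bloch (ψ k))^2/4 :=
    fun k => pureVar_eq a ha (ψ k) (hψ k)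
  -- per-state key inequality
  have hkey : ∀ k, (b ⬝ᵥ bloch (ψ k))^2 ≤ 1 - (a ⬝ᵥ bloch (ψ k))^2 + |c| :=
    fun k => key_scalar a b (bloch (ψ k)) ha hb (bloch_unit (ψ k) (hψ k))
  have hjen := jensen_sq p (fun k => b ⬝ᵥ bloch (ψ k)) hp hp1
  have hsum2 : ∑ k, p k * (b ⬝ᵥ bloch (ψ k))^2
      ≤ ∑ k, p k * (1 - (a ⬝ᵥ bloch (ψ k))^2 + |c|) := by
    exact Finset.sum_le_sum fun k _ => mul_le_mul_of_nonneg_left (hkey k) (hp k)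
  have hexp : ∑ k, p k * (1 - (a ⬝ᵥ bloch (ψ k))^2 + |c|)
      = (∑ k, p k * (1 - (a ⬝ᵥ bloch (ψ k))^2)) + |c| := by
    have h1 : ∑ k, p k * (1 - (a ⬝ᵥ bloch (ψ k))^2 + |c|)
        = ∑ k, (p k * (1 - (a ⬝ᵥ bloch (ψ k))^2) + p k * |c|) :=
      Finset.sum_congr rfl fun k _ => by ring
    rw [h1, Finset.sum_add_distrib, ← Finset.sum_mul, hp1, one_mul]
  have hU : ∑ k, p k * (1 - (a ⬝ᵥ bloch (ψ k))^2)
      = 1 - ∑ k, p k * (a ⬝ᵥ bloch (ψ k))^2 := by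
    have h1 : ∑ k, p k * (1 - (a ⬝ᵥ bloch (ψ k))^2)
        = ∑ k, (p k - p k * (a ⬝ᵥ bloch (ψ k))^2) :=
      Finset.sum_congr rfl fun k _ => by ring
    rw [h1, Finset.sum_sub_distrib, hp1]
  have hPsum : ∑ k, p k * pureVar (Lspin a) (ψ k)
      = (∑ k, p k)/4 - (∑ k, p k * (a ⬝ᵥ bloch (ψ k))^2)/4 := by
    rw [Finset.sum_div, Finset.sum_div, ← Finset.sum_sub_distrib]
    exact Finset.sum_congr rfl fun k _ => by rw [hpure k]; ring
  have hjen' : (∑ k, p k * (b ⬝ᵥ bloch (ψ k)))^2 ≤ ∑ k, p k * (b ⬝ᵥ bloch (ψ k))^2 := hjen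
  rw [hPsum, hmix, hp1]
  nlinarith [hjen', hsum2, hexp, hU]
end
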